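/- arXiv:2507.09219 — 5 statements merged into one kernel-verified Lean document; each statement's English description precedes it below -/
import Mathlib

section
/- Let $n \geq 1$, $s \in (0,1)$, and let $x, y \in \mathbb{R}^n_+ = \{z \in \mathbb{R}^n : z_1 > 0\}$ with $x \neq y$, and let $x_* = x - 2x_1 e_1$ be the reflection of $x$ across $\{x_1 = 0\}$. Then $\frac{1}{|x-y|^{n+2s}} - \frac{1}{|x_*-y|^{n+2s}} \leq 2(n+2s)\,\frac{x_1 y_1}{|x-y|^{n+2s+2}}$. -/
open scoped RealInnerProductSpace

/-- MVT-based convexity estimate: for `0 < u ≤ v` and `q > 0`,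
`u ^ (-q) - v ^ (-q) ≤ q * u ^ (-q-1) * (v - u)`. -/
lemma aux_rpow_mvt (u v q : ℝ) (hu : 0 < u) (huv : u ≤ v) (hq : 0 < q) :
    u ^ (-q) - v ^ (-q) ≤ q * u ^ (-q - 1) * (v - u) := by
  rcases eq_or_lt_of_le huv with rfl | h
  · simp
  · have hcont : ContinuousOn (fun t : ℝ => t ^ (-q)) (Set.Icc u v) := fun t ht =>
      (Real.continuousAt_rpow_const t (-q) (Or.inl (ne_of_gt (lt_of_lt_of_le hu ht.1)))).continuousWithinAt
    have hderiv : ∀ c ∈ Set.Ioo u v,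
        HasDerivAt (fun t : ℝ => t ^ (-q)) (-q * c ^ (-q - 1)) c := by
      intro c hc
      have := Real.hasDerivAt_rpow_const (x := c) (p := -q)
        (Or.inl (ne_of_gt (hu.trans hc.1)))
      simpa [sub_eq_add_neg, add_comm] using this
    obtain ⟨c, hc, hceq⟩ := exists_hasDerivAt_eq_slope (fun t : ℝ => t ^ (-q))
      (fun c => -q * c ^ (-q - 1)) h hcont hderiv
    have hvu : (0:ℝ) < v - u := sub_pos.mpr h
    have heq : u ^ (-q) - v ^ (-q) = q * c ^ (-q - 1) * (v - u) := by
      have := hceq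
      field_simp at this ⊢
      nlinarith [this]
    rw [heq]
    have hcle : c ^ (-q - 1) ≤ u ^ (-q - 1) :=
      Real.rpow_le_rpow_of_nonpos hu hc.1.le (by linarith)
    have h4 : q * c ^ (-q - 1) ≤ q * u ^ (-q - 1) := mul_le_mul_of_nonneg_left hcle hq.le
    exact mul_le_mul_of_nonneg_right h4 hvu.le

theorem stmt_3 (n : ℕ) (hn : 1 ≤ n) (s : ℝ) (hs : s ∈ Set.Ioo (0 : ℝ) 1)
    (x y : EuclideanSpace ℝ (Fin n))
    (hx : 0 < x ⟨0, hn⟩) (hy : 0 < y ⟨0, hn⟩) (hxy : x ≠ y) :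
    1 / ‖x - y‖ ^ ((n : ℝ) + 2 * s) -
        1 / ‖(x - (2 * x ⟨0, hn⟩) • EuclideanSpace.single (⟨0, hn⟩ : Fin n) 1) - y‖ ^ ((n : ℝ) + 2 * s)
      ≤ 2 * ((n : ℝ) + 2 * s) * (x ⟨0, hn⟩ * y ⟨0, hn⟩) / ‖x - y‖ ^ ((n : ℝ) + 2 * s + 2) := by
  obtain ⟨hs0, hs1⟩ := hs
  set i : Fin n := ⟨0, hn⟩
  set p : ℝ := (n : ℝ) + 2 * s with hpdef
  have hp : 0 < p := by
    have : (1:ℝ) ≤ (n:ℝ) := by exact_mod_cast hn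
    simp only [hpdef]; linarith
  set a : ℝ := ‖x - y‖ with ha
  set b : ℝ := ‖(x - (2 * x i) • EuclideanSpace.single i 1) - y‖ with hb
  have ha0 : 0 < a := by
    simpa [ha] using norm_pos_iff.mpr (sub_ne_zero.mpr hxy)
  -- the key norm identity
  have hsq : b ^ 2 = a ^ 2 + 4 * (x i * y i) := by
    have hrw : (x - (2 * x i) • EuclideanSpace.single i 1) - y
        = (x - y) - (2 * x i) • EuclideanSpace.single i 1 := by
      abel
    have hinner : (inner ℝ (x - y) ((2 * x i) • EuclideanSpace.single i (1:ℝ)) : ℝ)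
        = 2 * x i * (x i - y i) := by
      rw [real_inner_smul_right]
      have := EuclideanSpace.inner_single_right (𝕜 := ℝ) i 1 (x - y)
      simp only [RCLike.inner_apply] at this ⊢
      rw [this]
      simp
    have hnv : ‖(2 * x i) • EuclideanSpace.single i (1:ℝ)‖ = |2 * x i| := by
      rw [norm_smul]; simp [Real.norm_eq_abs, abs_mul]
    rw [hb, hrw, @norm_sub_sq_real, hinner, hnv, sq_abs]
    ring
  have hab : a ^ 2 ≤ b ^ 2 := by nlinarith
  have key := aux_rpow_mvt (a ^ 2) (b ^ 2) (p / 2) (by positivity) hab (by positivity)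
  have hconv : ∀ r : ℝ, (a ^ 2 : ℝ) ^ r = a ^ (2 * r) := by
    intro r
    rw [← Real.rpow_natCast a 2, ← Real.rpow_mul ha0.le]
    norm_num
  have hb0 : 0 < b := by
    have h2 : (0:ℝ) < b ^ 2 := by nlinarith
    have hbnn : 0 ≤ b := hb ▸ norm_nonneg _
    nlinarith [hbnn]
  have hbconv : (b ^ 2 : ℝ) ^ (-(p / 2)) = b ^ (-p) := by
    rw [← Real.rpow_natCast b 2, ← Real.rpow_mul hb0.le]
    congr 1
    push_cast
    ring
  rw [hconv, hbconv, hconv] at key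
  have e1 : 2 * -(p / 2) = -p := by ring
  have e2 : 2 * (-(p / 2) - 1) = -(p + 2) := by ring
  rw [e1, e2] at key
  have hsub : b ^ 2 - a ^ 2 = 4 * (x i * y i) := by linarith
  rw [hsub] at key
  have h1 : a ^ (-p) = 1 / a ^ p := by
    rw [Real.rpow_neg ha0.le, one_div]
  have h2 : b ^ (-p) = 1 / b ^ p := by
    rw [Real.rpow_neg hb0.le, one_div]
  have h3 : a ^ (-(p + 2)) = 1 / a ^ (p + 2) := by
    rw [Real.rpow_neg ha0.le, one_div]
  rw [h1, h2, h3] at key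
  calc 1 / a ^ p - 1 / b ^ p ≤ p / 2 * (1 / a ^ (p + 2)) * (4 * (x i * y i)) := key
    _ = 2 * p * (x i * y i) / a ^ (p + 2) := by ring
end

section
/- Let $n \geq 1$, $s \in (0,1)$, and let $x, y \in \mathbb{R}^n_+$ with $x \neq y$, and $x_* = x - 2x_1 e_1$. Then $\frac{1}{|x-y|^{n+2s}} - \frac{1}{|x_*-y|^{n+2s}} \geq 2(n+2s)\,\frac{x_1 y_1}{|x_*-y|^{n+2s+2}}$. -/
open Real

lemma aux_ineq (A B p : ℝ) (hA : 0 < A) (hB : 0 < B) (hAB : A ≤ B) (hp : 0 < p) :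
    p / 2 * (B ^ 2 - A ^ 2) / B ^ (p + 2) ≤ 1 / A ^ p - 1 / B ^ p := by
  set u : ℝ := (A / B) ^ 2 with hu_def
  have hu : 0 < u := by positivity
  have hu1 : u ≤ 1 := by
    have : A / B ≤ 1 := (div_le_one hB).mpr hAB
    have h0 : 0 ≤ A / B := by positivity
    nlinarith
  have hlog : Real.log u ≤ u - 1 := Real.log_le_sub_one_of_pos hu
  have hexp : (p / 2) * (-(Real.log u)) + 1 ≤ Real.exp ((p / 2) * (-(Real.log u))) :=
    Real.add_one_le_exp _
  have h3 : Real.exp ((p / 2) * (-(Real.log u))) = u ^ (-(p / 2)) := by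
    rw [Real.rpow_def_of_pos hu]; ring_nf
  have h4 : u ^ (-(p / 2)) = B ^ p / A ^ p := by
    rw [hu_def, ← Real.rpow_natCast (A / B) 2, ← Real.rpow_mul (by positivity)]
    have h2 : ((2:ℕ):ℝ) * -(p/2) = -p := by push_cast; ring
    rw [h2, Real.rpow_neg (by positivity), Real.div_rpow hA.le hB.le, inv_div]
  have key : 1 + p / 2 * (1 - u) ≤ B ^ p / A ^ p := by
    have h5 : 1 + p / 2 * (1 - u) ≤ (p / 2) * (-(Real.log u)) + 1 := by nlinarith
    calc 1 + p / 2 * (1 - u) ≤ (p / 2) * (-(Real.log u)) + 1 := h5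
      _ ≤ Real.exp ((p / 2) * (-(Real.log u))) := hexp
      _ = B ^ p / A ^ p := by rw [h3, h4]
  have hBp : (0:ℝ) < B ^ p := Real.rpow_pos_of_pos hB p
  have hAp : (0:ℝ) < A ^ p := Real.rpow_pos_of_pos hA p
  have hsplit : B ^ (p + 2) = B ^ p * B ^ 2 := by
    rw [Real.rpow_add hB, Real.rpow_two]
  have hu_eq : u = A ^ 2 / B ^ 2 := by rw [hu_def, div_pow]
  rw [hsplit]
  have hB2 : (0:ℝ) < B ^ 2 := by positivity
  rw [div_le_iff₀ (by positivity), sub_mul, one_div, one_div]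
  have e1 : (A ^ p)⁻¹ * (B ^ p * B ^ 2) = (B ^ p / A ^ p) * B ^ 2 := by ring
  have e2 : (B ^ p)⁻¹ * (B ^ p * B ^ 2) = B ^ 2 := by field_simp
  rw [e1, e2]
  have : (1 + p / 2 * (1 - u)) * B ^ 2 ≤ (B ^ p / A ^ p) * B ^ 2 := by
    apply mul_le_mul_of_nonneg_right key hB2.le
  have hrw : (1 + p / 2 * (1 - u)) * B ^ 2 = B ^ 2 + p / 2 * (B ^ 2 - A ^ 2) := by
    rw [hu_eq]; field_simp
  nlinarith [this]

theorem stmt_4 (n : ℕ) (hn : 1 ≤ n) (s : ℝ) (hs : s ∈ Set.Ioo (0 : ℝ) 1)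
    (x y : EuclideanSpace ℝ (Fin n))
    (hx : 0 < x ⟨0, hn⟩) (hy : 0 < y ⟨0, hn⟩) (hxy : x ≠ y) :
    2 * ((n : ℝ) + 2 * s) * (x ⟨0, hn⟩ * y ⟨0, hn⟩) /
        ‖(x - (2 * x ⟨0, hn⟩) • EuclideanSpace.single (⟨0, hn⟩ : Fin n) 1) - y‖ ^ ((n : ℝ) + 2 * s + 2)
      ≤ 1 / ‖x - y‖ ^ ((n : ℝ) + 2 * s) -
        1 / ‖(x - (2 * x ⟨0, hn⟩) • EuclideanSpace.single (⟨0, hn⟩ : Fin n) 1) - y‖ ^ ((n : ℝ) + 2 * s) := by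
  obtain ⟨hs0, hs1⟩ := hs
  set i0 : Fin n := ⟨0, hn⟩ with hi0
  set xs : EuclideanSpace ℝ (Fin n) := x - (2 * x i0) • EuclideanSpace.single i0 1 with hxs
  set A : ℝ := ‖x - y‖ with hAdef
  set B : ℝ := ‖xs - y‖ with hBdef
  set p : ℝ := (n : ℝ) + 2 * s with hpdef
  have hp : 0 < p := by
    have : (1:ℝ) ≤ (n:ℝ) := by exact_mod_cast hn
    rw [hpdef]; linarith
  have hA : 0 < A := by
    rw [hAdef, norm_pos_iff]
    exact sub_ne_zero.mpr hxy
  have hnormsq : ∀ v : EuclideanSpace ℝ (Fin n), ‖v‖ ^ 2 = ∑ i, (v i) ^ 2 := by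
    intro v
    rw [EuclideanSpace.norm_eq, Real.sq_sqrt (by positivity)]
    simp [Real.norm_eq_abs, sq_abs]
  have hterm : ∀ i, ((xs - y) i) ^ 2 - ((x - y) i) ^ 2
      = if i = i0 then 4 * x i0 * y i0 else 0 := by
    intro i
    have hv : (xs - y) i = x i - 2 * x i0 * (if i = i0 then 1 else 0) - y i := by
      rw [hxs]
      simp [EuclideanSpace.single_apply, PiLp.sub_apply, PiLp.smul_apply, smul_eq_mul]
    have hw : (x - y) i = x i - y i := by simp [PiLp.sub_apply]
    rw [hv, hw]
    split_ifs with h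
    · subst h; ring
    · ring
  have hsq : B ^ 2 = A ^ 2 + 4 * x i0 * y i0 := by
    have h1 : B ^ 2 - A ^ 2 = ∑ i, (((xs - y) i) ^ 2 - ((x - y) i) ^ 2) := by
      rw [hBdef, hAdef, hnormsq, hnormsq, Finset.sum_sub_distrib]
    rw [Finset.sum_congr rfl (fun i _ => hterm i)] at h1
    rw [Finset.sum_ite_eq' Finset.univ i0 (fun _ => 4 * x i0 * y i0)] at h1
    simp at h1
    linarith
  have hB : 0 < B := by
    have h0 : 0 ≤ B := norm_nonneg _
    nlinarith
  have hAB : A ≤ B := by nlinarith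
  have := aux_ineq A B p hA hB hAB hp
  have heq : 2 * p * (x i0 * y i0) = p / 2 * (B ^ 2 - A ^ 2) := by
    rw [hsq]; ring
  calc 2 * p * (x i0 * y i0) / B ^ (p + 2)
      = p / 2 * (B ^ 2 - A ^ 2) / B ^ (p + 2) := by rw [heq]
    _ ≤ 1 / A ^ p - 1 / B ^ p := this
end

section
/- Let $n \geq 2$ and define $\phi_0 : B_1^{n-1} \to \mathbb{R}^n$ by $\phi_0(r) = \big(\tfrac{1}{2}\sqrt{1-|r|^2}, \tfrac{1}{2} r\big)$. Then $\sup_{r \neq \tilde{r} \in B_1^{n-1}} \frac{\big||r|^2 - |\tilde{r}|^2\big|}{|\phi_0(r) - \phi_0(\tilde{r})|} = 2$. -/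
set_option maxHeartbeats 1000000

lemma key_alg (a b u v : ℝ) (h1 : u^2 = 1 - a^2) (h2 : v^2 = 1 - b^2) :
    (a^2 - b^2)^2 ≤ (u - v)^2 + (a - b)^2 := by
  nlinarith [sq_nonneg (u*a - v*b), sq_nonneg (u*b - v*a), sq_nonneg ((u-v) + (a-b)),
    sq_nonneg ((u-v) - (a-b)), sq_nonneg (u*v - a*b), sq_nonneg (u*v + a*b)]

lemma aux_pos (s : ℝ) (h0 : 0 < s) (h12 : s ≤ 1/2) : 0 ≤ 1 - s^2 := by nlinarith

lemma aux_lt1 (x : ℝ) (h0 : 0 ≤ x) (hx2 : x^2 < 1) : x < 1 := by nlinarith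

lemma aux_main (c s σ k w : ℝ) (hs0 : 0 < s) (hs12 : s ≤ 1/2)
    (hσ0 : 0 ≤ σ) (hσ2 : σ^2 = 1 - s^2) (hk0 : 0 < k) (hk2 : k^2 = 2)
    (hw0 : 0 < w) (hw2 : w^2 = 1 - σ) (hcs : c ≤ 2 - 4*s) :
    c * (1/2 * (k * w)) < s := by
  have hσ1 : σ ≤ 1 := by nlinarith
  have hσge : σ^2 ≤ σ := by nlinarith
  have hc'0 : (0:ℝ) ≤ 2 - 4*s := by linarith
  have hc'sq : (2 - 4*s)^2 < 2 + 2*σ := by nlinarith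
  have hpos : 0 < 2 * (1 - σ) := by nlinarith
  have h1 : (2 - 4*s)^2 * (2*(1 - σ)) < (2 + 2*σ) * (2*(1 - σ)) :=
    mul_lt_mul_of_pos_right hc'sq hpos
  have hkw : (k*w)^2 = 2*(1 - σ) := by rw [mul_pow, hk2, hw2]
  have hsq2 : ((2 - 4*s) * (k * w))^2 < (2*s)^2 := by
    calc ((2 - 4*s) * (k * w))^2 = (2 - 4*s)^2 * (2*(1 - σ)) := by rw [mul_pow, hkw]
      _ < (2 + 2*σ) * (2*(1 - σ)) := h1
      _ = (2*s)^2 := by linear_combination (-4) * hσ2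
  have hlin : (2 - 4*s) * (k * w) < 2*s :=
    lt_of_pow_lt_pow_left₀ 2 (by positivity) hsq2
  have hcle : c * (k * w) ≤ (2 - 4*s) * (k * w) :=
    mul_le_mul_of_nonneg_right hcs (by positivity)
  nlinarith

theorem stmt_8 (n : ℕ) (hn : 2 ≤ n) :
    sSup { q : ℝ | ∃ r r' : EuclideanSpace ℝ (Fin (n - 1)),
        r ∈ Metric.ball 0 1 ∧ r' ∈ Metric.ball 0 1 ∧ r ≠ r' ∧
        q = |‖r‖ ^ 2 - ‖r'‖ ^ 2| /
          ((1/2) * Real.sqrt ((Real.sqrt (1 - ‖r‖ ^ 2) - Real.sqrt (1 - ‖r'‖ ^ 2)) ^ 2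
            + ‖r - r'‖ ^ 2)) } = 2 := by
  have hub : ∀ q ∈ { q : ℝ | ∃ r r' : EuclideanSpace ℝ (Fin (n - 1)),
        r ∈ Metric.ball 0 1 ∧ r' ∈ Metric.ball 0 1 ∧ r ≠ r' ∧
        q = |‖r‖ ^ 2 - ‖r'‖ ^ 2| /
          ((1/2) * Real.sqrt ((Real.sqrt (1 - ‖r‖ ^ 2) - Real.sqrt (1 - ‖r'‖ ^ 2)) ^ 2
            + ‖r - r'‖ ^ 2)) }, q ≤ 2 := by
    rintro q ⟨r, r', hr, hr', hne, rfl⟩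
    have hr1 : ‖r‖ < 1 := mem_ball_zero_iff.mp hr
    have hr'1 : ‖r'‖ < 1 := mem_ball_zero_iff.mp hr'
    have ha0 : 0 ≤ ‖r‖ := norm_nonneg r
    have hb0 : 0 ≤ ‖r'‖ := norm_nonneg r'
    have hu2 : Real.sqrt (1 - ‖r‖^2) ^ 2 = 1 - ‖r‖^2 :=
      Real.sq_sqrt (by nlinarith [norm_nonneg r, mem_ball_zero_iff.mp hr])
    have hv2 : Real.sqrt (1 - ‖r'‖^2) ^ 2 = 1 - ‖r'‖^2 :=
      Real.sq_sqrt (by nlinarith [norm_nonneg r', mem_ball_zero_iff.mp hr'])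
    have hd0 : 0 < ‖r - r'‖ := by
      rw [norm_pos_iff, sub_ne_zero]; exact hne
    have hdab : |‖r‖ - ‖r'‖| ≤ ‖r - r'‖ := abs_norm_sub_norm_le r r'
    have hdab2 : (‖r‖ - ‖r'‖)^2 ≤ ‖r - r'‖^2 := by
      nlinarith [abs_nonneg (‖r‖ - ‖r'‖), sq_abs (‖r‖ - ‖r'‖), hdab]
    set u := Real.sqrt (1 - ‖r‖^2)
    set v := Real.sqrt (1 - ‖r'‖^2)
    have hD : 0 < (u - v)^2 + ‖r - r'‖^2 := by positivity
    have hsq : 0 < Real.sqrt ((u - v)^2 + ‖r - r'‖^2) := Real.sqrt_pos.mpr hD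
    rw [div_le_iff₀ (by linarith)]
    have hkey : |‖r‖^2 - ‖r'‖^2| ^ 2 ≤ (u - v)^2 + ‖r - r'‖^2 := by
      rw [sq_abs]
      have := key_alg ‖r‖ ‖r'‖ u v hu2 hv2
      linarith
    have h1 : |‖r‖^2 - ‖r'‖^2| ≤ Real.sqrt ((u - v)^2 + ‖r - r'‖^2) :=
      (Real.le_sqrt (abs_nonneg _) hD.le).mpr hkey
    linarith
  apply le_antisymm (Real.sSup_le hub (by norm_num))
  refine le_of_forall_lt fun c hc => ?_
  set c' : ℝ := max c 0 with hc'def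
  have hc'0 : 0 ≤ c' := le_max_right c 0
  have hcs : c ≤ c' := le_max_left c 0
  have hc'2 : c' < 2 := max_lt hc (by norm_num)
  set s : ℝ := (2 - c') / 4 with hsdef
  have hs0 : 0 < s := by rw [hsdef]; linarith
  have hs12 : s ≤ 1/2 := by rw [hsdef]; linarith
  have hs2 : 0 ≤ 1 - s^2 := aux_pos s hs0 hs12
  set t : ℝ := Real.sqrt ((1 + s)/2) with htdef
  set t' : ℝ := Real.sqrt ((1 - s)/2) with ht'def
  have ht0 : 0 ≤ t := Real.sqrt_nonneg _
  have ht'0 : 0 ≤ t' := Real.sqrt_nonneg _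
  have ht2 : t^2 = (1 + s)/2 := Real.sq_sqrt (by linarith)
  have ht'2 : t'^2 = (1 - s)/2 := Real.sq_sqrt (by linarith)
  have htt' : t' < t := Real.sqrt_lt_sqrt (by linarith) (by linarith)
  set i : Fin (n - 1) := ⟨0, by omega⟩ with hidef
  set e : EuclideanSpace ℝ (Fin (n - 1)) := EuclideanSpace.single i (1:ℝ) with hedef
  have he : ‖e‖ = 1 := by rw [hedef, EuclideanSpace.norm_single]; norm_num
  set r : EuclideanSpace ℝ (Fin (n - 1)) := t • e with hrdef
  set r' : EuclideanSpace ℝ (Fin (n - 1)) := t' • e with hr'def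
  have hnr : ‖r‖ = t := by
    rw [hrdef, norm_smul, he, mul_one, Real.norm_eq_abs, abs_of_nonneg ht0]
  have hnr' : ‖r'‖ = t' := by
    rw [hr'def, norm_smul, he, mul_one, Real.norm_eq_abs, abs_of_nonneg ht'0]
  have hrball : r ∈ Metric.ball (0 : EuclideanSpace ℝ (Fin (n - 1))) 1 := by
    rw [mem_ball_zero_iff, hnr]
    exact aux_lt1 t ht0 (by rw [ht2]; linarith)
  have hr'ball : r' ∈ Metric.ball (0 : EuclideanSpace ℝ (Fin (n - 1))) 1 := by
    rw [mem_ball_zero_iff, hnr']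
    exact aux_lt1 t' ht'0 (by rw [ht'2]; linarith)
  have hne : r ≠ r' := by
    intro h
    have : t = t' := by rw [← hnr, ← hnr', h]
    linarith
  set w : ℝ := t - t' with hwdef
  have hw0 : 0 < w := by rw [hwdef]; linarith
  have hrr' : ‖r - r'‖ = w := by
    rw [hrdef, hr'def, ← sub_smul, norm_smul, he, mul_one, Real.norm_eq_abs,
      abs_of_pos hw0]
  set σ : ℝ := Real.sqrt (1 - s^2) with hσdef
  have hσ0 : 0 ≤ σ := Real.sqrt_nonneg _
  have hσ2 : σ^2 = 1 - s^2 := Real.sq_sqrt hs2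
  have htt : t * t' = σ / 2 := by
    rw [htdef, ht'def, ← Real.sqrt_mul (by linarith), hσdef,
      show (1 + s)/2 * ((1 - s)/2) = (1 - s^2) * (1/2)^2 by ring,
      Real.sqrt_mul hs2, Real.sqrt_sq (by norm_num)]
    ring
  have hw2 : w^2 = 1 - σ := by
    have h : w^2 = t^2 + t'^2 - 2*(t*t') := by rw [hwdef]; ring
    rw [h, ht2, ht'2, htt]; ring
  set k : ℝ := Real.sqrt 2 with hkdef
  have hk0 : 0 < k := Real.sqrt_pos.mpr (by norm_num)
  have hk2 : k^2 = 2 := Real.sq_sqrt (by norm_num)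
  refine lt_csSup_of_lt ⟨2, fun q hq => hub q hq⟩
    ⟨r, r', hrball, hr'ball, hne, rfl⟩ ?_
  have e1 : Real.sqrt (1 - ‖r‖^2) = t' := by
    rw [hnr, show (1:ℝ) - t^2 = t'^2 by rw [ht2, ht'2]; ring, Real.sqrt_sq ht'0]
  have e2 : Real.sqrt (1 - ‖r'‖^2) = t := by
    rw [hnr', show (1:ℝ) - t'^2 = t^2 by rw [ht2, ht'2]; ring, Real.sqrt_sq ht0]
  have e3 : |‖r‖^2 - ‖r'‖^2| = s := by
    rw [hnr, hnr', show t^2 - t'^2 = s by rw [ht2, ht'2]; ring, abs_of_pos hs0]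
  have e4 : (t' - t)^2 + ‖r - r'‖^2 = (k * w)^2 := by
    rw [hrr', show (t' - t)^2 = w^2 by rw [hwdef]; ring, mul_pow, hk2]; ring
  rw [e3, e1, e2, e4, Real.sqrt_sq (by positivity)]
  rw [lt_div_iff₀ (by positivity)]
  have hcs' : c ≤ 2 - 4*s := by rw [hsdef]; linarith
  exact aux_main c s σ k w hs0 hs12 hσ0 hσ2 hk0 hk2 hw0 hw2 hcs'
end

section
/- Let $\Omega \subset \mathbb{R}^n$ be a bounded measurable set and $x \in \Omega$. Then $\int_{\mathbb{R}^n \setminus \Omega} \frac{dy}{|x-y|^{n+2s}} \geq \frac{n}{2s}\, |B_1|^{1+2s/n}\, |\Omega|^{-2s/n}$, for any $s \in (0,1)$. -/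
open MeasureTheory Metric Set Module
open scoped ENNReal

lemma aux_nontrivial (n : ℕ) (hn : 1 ≤ n) : Nontrivial (EuclideanSpace ℝ (Fin n)) := by
  have : 0 < finrank ℝ (EuclideanSpace ℝ (Fin n)) := by
    rw [finrank_euclideanSpace_fin]; exact hn
  exact Module.nontrivial_of_finrank_pos this

lemma aux_integrable (n : ℕ) (hn : 1 ≤ n) (p : ℝ) (hp : (n : ℝ) < p) {r : ℝ} (hr : 0 < r) :
    IntegrableOn (fun y : EuclideanSpace ℝ (Fin n) => 1 / ‖y‖ ^ p) (ball 0 r)ᶜ := by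
  have hfin : (finrank ℝ (EuclideanSpace ℝ (Fin n)) : ℝ) < p := by
    rwa [finrank_euclideanSpace_fin]
  have hint := (integrable_one_add_norm (E := EuclideanSpace ℝ (Fin n)) (μ := volume) hfin)
  set C : ℝ := ((1 + r) / r) ^ p with hC
  refine Integrable.mono' ((hint.const_mul C).restrict (s := (ball 0 r)ᶜ)) ?_ ?_
  · refine (Measurable.aestronglyMeasurable ?_).restrict
    fun_prop
  · rw [ae_restrict_iff' measurableSet_ball.compl]
    filter_upwards with y hy
    rw [mem_compl_iff, mem_ball, dist_zero_right, not_lt] at hy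
    have hy0 : 0 < ‖y‖ := lt_of_lt_of_le hr hy
    have h1 : 1 + ‖y‖ ≤ (1 + r) / r * ‖y‖ := by
      rw [div_mul_eq_mul_div, le_div_iff₀ hr]
      nlinarith [norm_nonneg y]
    have hCpos : 0 < C := Real.rpow_pos_of_pos (div_pos (by linarith) hr) p
    have h2 : (1 + ‖y‖) ^ p ≤ C * ‖y‖ ^ p := by
      rw [hC, ← Real.mul_rpow (div_pos (by linarith) hr).le (norm_nonneg y)]
      exact Real.rpow_le_rpow (by positivity) h1 ((Nat.cast_nonneg n).trans_lt hp).le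
    rw [Real.norm_of_nonneg (by positivity), one_div,
      Real.rpow_neg (by positivity : (0:ℝ) ≤ 1 + ‖y‖)]
    calc (‖y‖ ^ p)⁻¹ = C * (C * ‖y‖ ^ p)⁻¹ := by
          rw [mul_inv, ← mul_assoc, mul_inv_cancel₀ hCpos.ne', one_mul]
      _ ≤ C * ((1 + ‖y‖) ^ p)⁻¹ := by
          gcongr

lemma aux_value (n : ℕ) (hn : 1 ≤ n) (s : ℝ) (hs0 : 0 < s) {r : ℝ} (hr : 0 < r) :
    ∫⁻ y in (ball (0 : EuclideanSpace ℝ (Fin n)) r)ᶜ,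
        ENNReal.ofReal (1 / ‖y‖ ^ ((n : ℝ) + 2 * s))
      = ENNReal.ofReal ((n : ℝ) * (volume (ball (0 : EuclideanSpace ℝ (Fin n)) 1)).toReal
          * r ^ (-(2 * s)) / (2 * s)) := by
  haveI := aux_nontrivial n hn
  set p : ℝ := (n : ℝ) + 2 * s with hp
  have hnp : (n : ℝ) < p := by rw [hp]; linarith
  have hint := aux_integrable n hn p hnp hr
  rw [← ofReal_integral_eq_lintegral_ofReal hint (ae_of_all _ fun y => by positivity)]
  congr 1
  have key : ((ball (0:EuclideanSpace ℝ (Fin n)) r)ᶜ).indicator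
        (fun y : EuclideanSpace ℝ (Fin n) => 1 / ‖y‖ ^ p)
      = fun y => ((Ici r).indicator (fun t : ℝ => 1 / t ^ p)) ‖y‖ := by
    funext y
    by_cases h : r ≤ ‖y‖ <;>
      simp [Set.indicator, mem_ball, dist_zero_right, not_lt, h, lt_of_not_ge, *]
  rw [← integral_indicator measurableSet_ball.compl, key,
    integral_fun_norm_addHaar volume ((Ici r).indicator (fun t : ℝ => 1 / t ^ p)),
    finrank_euclideanSpace_fin]
  have step1 : (fun t : ℝ => t ^ (n - 1) • (Ici r).indicator (fun t : ℝ => 1 / t ^ p) t)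
      = (Ici r).indicator (fun t : ℝ => t ^ (n - 1) * (1 / t ^ p)) := by
    funext t
    by_cases h : t ∈ Ici r <;> simp [Set.indicator, h]
  have step2 : ∫ t in Ioi (0:ℝ), t ^ (n - 1) • (Ici r).indicator (fun t : ℝ => 1 / t ^ p) t
      = ∫ t in Ioi r, t ^ ((n : ℝ) - 1 - p) := by
    have hsub : Ioi (0:ℝ) ∩ Ici r = Ici r :=
      inter_eq_right.mpr fun t (ht : t ∈ Ici r) => lt_of_lt_of_le hr ht
    rw [step1, setIntegral_indicator measurableSet_Ici, hsub, integral_Ici_eq_integral_Ioi]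
    refine setIntegral_congr_fun measurableSet_Ioi fun t ht => ?_
    have ht0 : 0 < t := hr.trans ht
    rw [← Real.rpow_natCast t (n-1), Nat.cast_sub hn, Nat.cast_one, one_div,
      ← Real.rpow_neg ht0.le, ← Real.rpow_add ht0]
    ring_nf
  rw [step2, integral_Ioi_rpow_of_lt (by rw [hp]; linarith) hr]
  have he : (n : ℝ) - 1 - p + 1 = -(2*s) := by rw [hp]; ring
  rw [he, nsmul_eq_mul, smul_eq_mul]
  simp only [measureReal_def]
  field_simp

theorem stmt_11 (n : ℕ) (hn : 1 ≤ n) (s : ℝ) (hs : s ∈ Set.Ioo (0 : ℝ) 1)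
    (Ω : Set (EuclideanSpace ℝ (Fin n))) (hΩm : MeasurableSet Ω) (hΩb : Bornology.IsBounded Ω)
    (x : EuclideanSpace ℝ (Fin n)) (hx : x ∈ Ω) :
    ENNReal.ofReal (((n : ℝ) / (2 * s)) *
        (volume (Metric.ball (0 : EuclideanSpace ℝ (Fin n)) 1)).toReal ^ (1 + 2 * s / n) *
        (volume Ω).toReal ^ (-(2 * s) / n))
      ≤ ∫⁻ y in Ωᶜ, ENNReal.ofReal (1 / ‖x - y‖ ^ ((n : ℝ) + 2 * s)) := by
  have hs0 : 0 < s := hs.1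
  have hn0 : (0:ℝ) < n := by exact_mod_cast hn
  haveI := aux_nontrivial n hn
  set B : ℝ := (volume (Metric.ball (0 : EuclideanSpace ℝ (Fin n)) 1)).toReal with hB
  set p : ℝ := (n : ℝ) + 2 * s with hp
  have hp0 : 0 < p := by rw [hp]; positivity
  set f : EuclideanSpace ℝ (Fin n) → ℝ≥0∞ := fun y => ENNReal.ofReal (1 / ‖x - y‖ ^ p) with hf
  rcases eq_or_ne (volume Ω) 0 with hV0 | hV0
  · have hne : -(2*s)/(n:ℝ) ≠ 0 := by
      exact div_ne_zero (neg_ne_zero.mpr (by positivity)) hn0.ne'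
    rw [hV0]
    simp [Real.zero_rpow hne]
  have hVlt : volume Ω < ⊤ := hΩb.measure_lt_top
  set V : ℝ := (volume Ω).toReal with hV
  have hVpos : 0 < V := ENNReal.toReal_pos hV0 hVlt.ne
  have hBpos : 0 < B :=
    ENNReal.toReal_pos (measure_ball_pos volume 0 one_pos).ne' measure_ball_lt_top.ne
  set r : ℝ := (V / B) ^ (1/(n:ℝ)) with hr
  have hrpos : 0 < r := Real.rpow_pos_of_pos (div_pos hVpos hBpos) _
  set K : Set (EuclideanSpace ℝ (Fin n)) := Metric.ball x r with hK
  -- volume of K equals volume of Ω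
  have hball : volume K = volume Ω := by
    rw [hK, Measure.addHaar_ball volume x hrpos.le, finrank_euclideanSpace_fin]
    have hrn : r ^ n * B = V := by
      rw [hr, ← Real.rpow_natCast ((V/B) ^ (1/(n:ℝ))) n, ← Real.rpow_mul (div_pos hVpos hBpos).le,
        one_div, inv_mul_cancel₀ hn0.ne', Real.rpow_one, div_mul_cancel₀ _ hBpos.ne']
    rw [← ENNReal.ofReal_toReal measure_ball_lt_top.ne, ← hB,
      ← ENNReal.ofReal_mul (by positivity), hrn, hV, ENNReal.ofReal_toReal hVlt.ne]
  -- translation invariance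
  have htrans : ∫⁻ y in Kᶜ, f y
      = ∫⁻ y in (Metric.ball (0 : EuclideanSpace ℝ (Fin n)) r)ᶜ,
          ENNReal.ofReal (1 / ‖y‖ ^ p) := by
    have hpre : (fun y => x - y) ⁻¹' (Metric.ball (0 : EuclideanSpace ℝ (Fin n)) r)ᶜ = Kᶜ := by
      ext y
      simp [hK, Metric.mem_ball, dist_eq_norm, norm_sub_rev]
    have h := (Measure.measurePreserving_sub_left volume x).setLIntegral_comp_preimage_emb
      (MeasurableEquiv.subLeft x).measurableEmbedding
      (fun z : EuclideanSpace ℝ (Fin n) => ENNReal.ofReal (1 / ‖z‖ ^ p))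
      ((Metric.ball (0 : EuclideanSpace ℝ (Fin n)) r)ᶜ)
    rw [hpre] at h
    exact h
  -- value of the integral over Kᶜ
  have hvalue : ∫⁻ y in Kᶜ, f y = ENNReal.ofReal ((n : ℝ) * B * r ^ (-(2 * s)) / (2 * s)) := by
    rw [htrans, aux_value n hn s hs0 hrpos]
  -- measurability of f
  have hfmeas : Measurable f := by
    apply ENNReal.measurable_ofReal.comp
    fun_prop
  -- bathtub
  have hμeq : volume (K \ Ω) = volume (Ω \ K) := by
    have h1 : volume (K ∩ Ω) + volume (K \ Ω) = volume K := measure_inter_add_diff K hΩm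
    have h2 : volume (K ∩ Ω) + volume (Ω \ K) = volume Ω := by
      rw [Set.inter_comm]; exact measure_inter_add_diff Ω measurableSet_ball
    have hfin : volume (K ∩ Ω) ≠ ⊤ :=
      ((measure_mono Set.inter_subset_right).trans_lt hVlt).ne
    rw [hball] at h1
    exact (ENNReal.add_right_inj hfin).mp (h1.trans h2.symm)
  set c : ℝ≥0∞ := ENNReal.ofReal (1 / r ^ p) with hc
  have hupper : ∫⁻ y in Ω \ K, f y ≤ c * volume (Ω \ K) := by
    rw [← setLIntegral_const (Ω \ K) c]
    refine setLIntegral_mono measurable_const fun y hy => ?_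
    have hyK : r ≤ ‖x - y‖ := by
      have := hy.2
      simp only [hK, Metric.mem_ball, dist_eq_norm, not_lt, norm_sub_rev] at this
      exact this
    rw [hf, hc]
    apply ENNReal.ofReal_le_ofReal
    apply one_div_le_one_div_of_le (Real.rpow_pos_of_pos hrpos p)
    exact Real.rpow_le_rpow hrpos.le hyK hp0.le
  have hlower : c * volume (K \ Ω) ≤ ∫⁻ y in K \ Ω, f y := by
    have hnull : volume (K \ Ω) = volume ((K \ Ω) \ {x}) :=
      (measure_diff_null (measure_singleton x)).symm
    rw [hnull, ← setLIntegral_const ((K \ Ω) \ {x}) c]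
    calc ∫⁻ _ in (K \ Ω) \ {x}, c ≤ ∫⁻ y in (K \ Ω) \ {x}, f y := by
          refine setLIntegral_mono hfmeas fun y hy => ?_
          have hyx : y ≠ x := by simpa using hy.2
          have hlt : ‖x - y‖ < r := by
            have := hy.1.1
            simpa [hK, Metric.mem_ball, dist_eq_norm, norm_sub_rev] using this
          have hpos : 0 < ‖x - y‖ := by
            rw [norm_pos_iff, sub_ne_zero]; exact fun h => hyx h.symm
          rw [hf, hc]
          apply ENNReal.ofReal_le_ofReal
          apply one_div_le_one_div_of_le (Real.rpow_pos_of_pos hpos p)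
          exact Real.rpow_le_rpow hpos.le hlt.le hp0.le
      _ ≤ ∫⁻ y in K \ Ω, f y :=
          lintegral_mono' (Measure.restrict_mono Set.diff_subset le_rfl) le_rfl
  -- splitting
  have hKm : MeasurableSet K := measurableSet_ball
  have e1 : Kᶜ ∩ Ω = Ω \ K := by rw [Set.diff_eq, Set.inter_comm]
  have e2 : Kᶜ \ Ω = Ωᶜ ∩ Kᶜ := by rw [Set.diff_eq, Set.inter_comm]
  have e3 : Ωᶜ ∩ K = K \ Ω := by rw [Set.diff_eq, Set.inter_comm]
  have e4 : Ωᶜ \ K = Kᶜ ∩ Ωᶜ := by rw [Set.diff_eq, Set.inter_comm]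
  have hsplit1 : ∫⁻ y in Kᶜ, f y = (∫⁻ y in Ω \ K, f y) + ∫⁻ y in Ωᶜ ∩ Kᶜ, f y := by
    rw [← lintegral_inter_add_diff f Kᶜ hΩm, e1, e2]
  have hsplit2 : ∫⁻ y in Ωᶜ, f y = (∫⁻ y in K \ Ω, f y) + ∫⁻ y in Kᶜ ∩ Ωᶜ, f y := by
    rw [← lintegral_inter_add_diff f Ωᶜ hKm, e3, e4]
  -- arithmetic identity
  have harith : (n:ℝ)/(2*s) * B ^ (1+2*s/(n:ℝ)) * V ^ (-(2*s)/(n:ℝ))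
      = (n : ℝ) * B * r ^ (-(2 * s)) / (2 * s) := by
    have h1 : r ^ (-(2*s)) = V ^ (-(2*s)/(n:ℝ)) * B ^ (2*s/(n:ℝ)) := by
      rw [hr, ← Real.rpow_mul (div_pos hVpos hBpos).le, one_div, inv_mul_eq_div,
        Real.div_rpow hVpos.le hBpos.le, div_eq_mul_inv, ← Real.rpow_neg hBpos.le,
        neg_div, neg_neg]
    have h2 : B ^ (1+2*s/(n:ℝ)) = B * B ^ (2*s/(n:ℝ)) := by
      rw [Real.rpow_add hBpos, Real.rpow_one]
    rw [h1, h2]; ring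
  -- conclude
  calc ENNReal.ofReal ((n:ℝ)/(2*s) * B ^ (1+2*s/(n:ℝ)) * V ^ (-(2*s)/(n:ℝ)))
      = ∫⁻ y in Kᶜ, f y := by rw [harith, hvalue]
    _ = (∫⁻ y in Ω \ K, f y) + ∫⁻ y in Ωᶜ ∩ Kᶜ, f y := hsplit1
    _ ≤ (∫⁻ y in K \ Ω, f y) + ∫⁻ y in Ωᶜ ∩ Kᶜ, f y := by
        have hstep : ∫⁻ y in Ω \ K, f y ≤ ∫⁻ y in K \ Ω, f y :=
          calc ∫⁻ y in Ω \ K, f y ≤ c * volume (Ω \ K) := hupper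
            _ = c * volume (K \ Ω) := by rw [hμeq]
            _ ≤ _ := hlower
        exact add_le_add hstep le_rfl
    _ = ∫⁻ y in Ωᶜ, f y := by rw [hsplit2, Set.inter_comm Ωᶜ Kᶜ]
end

section
/- Let $n \geq 1$ and $s \in (0,1)$, and set $\psi(x) = (1-|x|^2)_+^s$ on $\mathbb{R}^n$. Then for every $x \in \partial B_1$ (i.e. $|x| = 1$), $\int_{B_1} \frac{(1-|y|^2)^s}{|x-y|^{n+2s}}\, dy = +\infty$. -/
open MeasureTheory Metric Filter Set Topology

theorem stmt_18 (n : ℕ) (hn : 1 ≤ n) (s : ℝ) (hs : s ∈ Set.Ioo (0 : ℝ) 1)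
    (x : EuclideanSpace ℝ (Fin n)) (hx : ‖x‖ = 1) :
    ∫⁻ y in Metric.ball (0 : EuclideanSpace ℝ (Fin n)) 1,
      ENNReal.ofReal ((1 - ‖y‖ ^ 2) ^ s / ‖x - y‖ ^ ((n : ℝ) + 2 * s)) = ⊤ := by
  obtain ⟨hs0, hs1⟩ := hs
  haveI : Nontrivial (EuclideanSpace ℝ (Fin n)) :=
    nontrivial_of_ne x 0 (by intro h; rw [h, norm_zero] at hx; norm_num at hx)
  set I := ∫⁻ y in Metric.ball (0 : EuclideanSpace ℝ (Fin n)) 1,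
      ENNReal.ofReal ((1 - ‖y‖ ^ 2) ^ s / ‖x - y‖ ^ ((n : ℝ) + 2 * s)) with hIdef
  set V := volume (Metric.ball (0 : EuclideanSpace ℝ (Fin n)) 1) with hVdef
  have hV0 : V ≠ 0 := (measure_ball_pos _ _ one_pos).ne'
  have hVt : V ≠ ⊤ := measure_ball_lt_top.ne
  set c : ℝ := ((2:ℝ) ^ s)⁻¹ * (((3:ℝ)/2) ^ ((n:ℝ) + 2*s))⁻¹ * ((2:ℝ)⁻¹) ^ n with hc
  have hcpos : 0 < c := by
    apply mul_pos (mul_pos _ _)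
    · positivity
    · exact inv_pos.mpr (Real.rpow_pos_of_pos (by norm_num) _)
    · exact inv_pos.mpr (Real.rpow_pos_of_pos (by norm_num) _)
  have key : ∀ r : ℝ, r ∈ Set.Ioo (0:ℝ) 1 →
      ENNReal.ofReal (c * (r ^ s)⁻¹) * V ≤ I := by
    rintro r ⟨hr0, hr1⟩
    set z : EuclideanSpace ℝ (Fin n) := (1 - r) • x with hz
    have hznorm : ‖z‖ = 1 - r := by
      rw [hz, norm_smul, hx, mul_one, Real.norm_eq_abs, abs_of_pos (by linarith)]
    have hxz : ‖x - z‖ = r := by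
      have hxe : x - z = r • x := by rw [hz]; module
      rw [hxe, norm_smul, hx, mul_one, Real.norm_eq_abs, abs_of_pos hr0]
    -- pointwise bound on the small ball
    have hpt : ∀ y ∈ Metric.ball z (r/2),
        ENNReal.ofReal ((r/2) ^ s / (3*r/2) ^ ((n:ℝ) + 2*s)) ≤
          ENNReal.ofReal ((1 - ‖y‖ ^ 2) ^ s / ‖x - y‖ ^ ((n : ℝ) + 2 * s)) := by
      intro y hy
      rw [Metric.mem_ball, dist_eq_norm] at hy
      have hynorm : ‖y‖ ≤ 1 - r/2 := by
        have h := norm_add_le z (y - z)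
        rw [add_sub_cancel] at h
        rw [hznorm] at h; linarith
      have h1 : r/2 ≤ 1 - ‖y‖ ^ 2 := by nlinarith [norm_nonneg y]
      have h2 : ‖x - y‖ ≤ 3*r/2 := by
        have h := norm_sub_le_norm_sub_add_norm_sub x z y
        have : ‖z - y‖ = ‖y - z‖ := norm_sub_rev _ _
        rw [hxz] at h; linarith
      have h3 : (0:ℝ) < ‖x - y‖ := by
        have h := norm_sub_norm_le x y
        rw [hx] at h; linarith
      apply ENNReal.ofReal_le_ofReal
      apply div_le_div₀ (Real.rpow_nonneg (by linarith) _)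
        (Real.rpow_le_rpow (by positivity) h1 hs0.le)
        (Real.rpow_pos_of_pos h3 _)
        (Real.rpow_le_rpow (norm_nonneg _) h2 (by positivity))
    have hsub : Metric.ball z (r/2) ⊆ Metric.ball (0 : EuclideanSpace ℝ (Fin n)) 1 := by
      intro y hy
      rw [Metric.mem_ball, dist_eq_norm] at hy
      rw [Metric.mem_ball, dist_zero_right]
      have h := norm_add_le z (y - z)
      rw [add_sub_cancel] at h
      rw [hznorm] at h; linarith
    have hvol : volume (Metric.ball z (r/2))
        = ENNReal.ofReal ((r/2) ^ n) * V := by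
      rw [hVdef, Measure.addHaar_ball volume z (by positivity : (0:ℝ) ≤ r/2),
        finrank_euclideanSpace_fin]
    have step2 : ENNReal.ofReal ((r/2) ^ s / (3*r/2) ^ ((n:ℝ) + 2*s))
          * volume (Metric.ball z (r/2))
        ≤ ∫⁻ y in Metric.ball z (r/2),
            ENNReal.ofReal ((1 - ‖y‖ ^ 2) ^ s / ‖x - y‖ ^ ((n : ℝ) + 2 * s)) := by
      rw [← setLIntegral_const]
      exact setLIntegral_mono' measurableSet_ball hpt
    have step1 : (∫⁻ y in Metric.ball z (r/2),
          ENNReal.ofReal ((1 - ‖y‖ ^ 2) ^ s / ‖x - y‖ ^ ((n : ℝ) + 2 * s))) ≤ I :=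
      lintegral_mono_set hsub
    -- the real identity
    have hid : (r/2:ℝ) ^ s / (3*r/2) ^ ((n:ℝ) + 2*s) * (r/2) ^ n = c * (r ^ s)⁻¹ := by
      have e1 : ((3:ℝ)*r/2) ^ ((n:ℝ) + 2*s)
          = (3/2) ^ ((n:ℝ) + 2*s) * (r ^ (n:ℝ) * (r ^ s * r ^ s)) := by
        rw [show (3*r/2:ℝ) = 3/2*r by ring,
          Real.mul_rpow (by norm_num) hr0.le,
          show (n:ℝ) + 2*s = (n:ℝ) + (s + s) by ring,
          Real.rpow_add hr0, Real.rpow_add hr0]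
      have e2 : (r/2:ℝ) ^ s = r ^ s * ((2:ℝ) ^ s)⁻¹ := by
        rw [Real.div_rpow hr0.le (by norm_num), div_eq_mul_inv]
      have e3 : ((r:ℝ)/2) ^ n = r ^ (n:ℝ) * ((2:ℝ)⁻¹) ^ n := by
        rw [div_pow, ← Real.rpow_natCast r n, inv_pow, div_eq_mul_inv]
      rw [e1, e2, e3, hc]
      have p1 : (0:ℝ) < ((3:ℝ)/2) ^ ((n:ℝ) + 2*s) := Real.rpow_pos_of_pos (by norm_num) _
      have p2 : (0:ℝ) < r ^ s := Real.rpow_pos_of_pos hr0 _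
      have p3 : (0:ℝ) < r ^ (n:ℝ) := Real.rpow_pos_of_pos hr0 _
      have p4 : (0:ℝ) < (2:ℝ) ^ s := Real.rpow_pos_of_pos (by norm_num) _
      field_simp
    calc ENNReal.ofReal (c * (r ^ s)⁻¹) * V
        = ENNReal.ofReal ((r/2) ^ s / (3*r/2) ^ ((n:ℝ) + 2*s))
            * (ENNReal.ofReal ((r/2) ^ n) * V) := by
          rw [← mul_assoc, ← ENNReal.ofReal_mul (by positivity), hid]
      _ = ENNReal.ofReal ((r/2) ^ s / (3*r/2) ^ ((n:ℝ) + 2*s))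
            * volume (Metric.ball z (r/2)) := by rw [hvol]
      _ ≤ _ := le_trans step2 step1
  -- take r → 0⁺
  have h1 : Tendsto (fun r : ℝ => r ^ s) (𝓝[>] (0:ℝ)) (𝓝[>] 0) := by
    rw [tendsto_nhdsWithin_iff]
    constructor
    · have hbase : Tendsto (fun r : ℝ => r ^ s) (𝓝 (0:ℝ)) (𝓝 ((0:ℝ) ^ s)) :=
        (Real.continuousAt_rpow_const 0 s (Or.inr hs0.le)).tendsto
      rw [Real.zero_rpow hs0.ne'] at hbase
      exact hbase.mono_left nhdsWithin_le_nhds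
    · filter_upwards [self_mem_nhdsWithin] with r hr
      exact Real.rpow_pos_of_pos hr s
  have h2 : Tendsto (fun r : ℝ => (r ^ s)⁻¹) (𝓝[>] (0:ℝ)) atTop :=
    tendsto_inv_nhdsGT_zero.comp h1
  have h3 : Tendsto (fun r : ℝ => c * (r ^ s)⁻¹) (𝓝[>] (0:ℝ)) atTop :=
    h2.const_mul_atTop hcpos
  have h4 : Tendsto (fun r : ℝ => ENNReal.ofReal (c * (r ^ s)⁻¹) * V) (𝓝[>] (0:ℝ)) (𝓝 ⊤) := by
    have h5 := ENNReal.Tendsto.mul_const (ENNReal.tendsto_ofReal_atTop.comp h3) (Or.inr hVt)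
    rwa [ENNReal.top_mul hV0] at h5
  have hev : ∀ᶠ r in 𝓝[>] (0:ℝ), ENNReal.ofReal (c * (r ^ s)⁻¹) * V ≤ I := by
    filter_upwards [Ioo_mem_nhdsGT_of_mem (by norm_num : (0:ℝ) ∈ Set.Ico 0 1)] with r hr
    exact key r hr
  exact top_le_iff.mp (le_of_tendsto h4 hev)
end
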